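/- arXiv:0903.0180 — 2 statements merged into one kernel-verified Lean document; each statement's English description precedes it below -/
import Mathlib

section
/- Let G ≤ Homeo(S¹) be transitive and contain a continuous deformation of the identity. Then either J_x = ∅ for every x ∈ S¹, or the complement S¹∖J_x is finite for every x ∈ S¹. -/
noncomputable section

open Filter Topology Set

/-- The circle `S¹`, realised as `ℝ/ℤ`. -/
abbrev S1 := UnitAddCircle

/-- Self-homeomorphisms of the circle. -/
abbrev HomeoCircle := S1 ≃ₜ S1

instance : Group HomeoCircle where
  mul f g := g.trans f
  one := Homeomorph.refl S1
  inv := Homeomorph.symm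
  mul_assoc _ _ _ := rfl
  one_mul _ := rfl
  mul_one _ := rfl
  inv_mul_cancel := Homeomorph.self_trans_symm

@[simp] lemma HomeoCircle.mul_apply (f g : HomeoCircle) (x : S1) : (f * g) x = f (g x) := rfl
@[simp] lemma HomeoCircle.one_apply (x : S1) : (1 : HomeoCircle) x = x := rfl
@[simp] lemma HomeoCircle.inv_apply (f : HomeoCircle) (x : S1) : f⁻¹ x = f.symm x := rfl

/-- The uniform topology on the homeomorphism group of the circle: the topology induced
by uniform convergence of a homeomorphism together with its inverse. -/
instance : TopologicalSpace HomeoCircle :=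
  TopologicalSpace.induced
    (fun f : HomeoCircle =>
      ((⟨f, f.continuous⟩ : C(S1, S1)), (⟨f.symm, f.symm.continuous⟩ : C(S1, S1))))
    inferInstance

/-- A homeomorphism of the circle is orientation preserving if it preserves the natural
cyclic (betweenness) order of the circle. -/
def OrientationPreserving (f : HomeoCircle) : Prop :=
  ∀ a b c : S1, btw a b c ↔ btw (f a) (f b) (f c)

/-- The group `Homeo(S¹)` of orientation-preserving homeomorphisms of the circle, as a
subgroup of the group of all self-homeomorphisms of the circle. -/
def HomeoS1 : Subgroup HomeoCircle where
  carrier := {f | OrientationPreserving f}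
  one_mem' := fun _ _ _ => Iff.rfl
  mul_mem' := fun {f g} hf hg a b c => (hg a b c).trans (hf _ _ _)
  inv_mem' := fun {f} hf a b c => by
    simpa using (hf (f.symm a) (f.symm b) (f.symm c)).symm

/-- A subset of `Homeo(S¹)` acts transitively on the circle. -/
def IsTransitiveGrp (H : Set HomeoCircle) : Prop :=
  ∀ x y : S1, ∃ g ∈ H, g x = y

/-- `H` is continuously `n`-transitive: for every compatible pair of paths of `n`-tuples of
pairwise-distinct points there is a continuous path in `H` carrying one to the other. -/
def ContinuouslyTransitive (H : Set HomeoCircle) (n : ℕ) : Prop :=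
  ∀ X Y : unitInterval → Fin n → S1,
    (∀ i, Continuous fun t => X t i) → (∀ i, Continuous fun t => Y t i) →
    (∀ t, Function.Injective (X t)) → (∀ t, Function.Injective (Y t)) →
    (∃ h : unitInterval → HomeoCircle, Continuous h ∧ (∀ t, h t ∈ HomeoS1) ∧
      ∀ t i, h t (X t i) = Y t i) →
    ∃ g : unitInterval → HomeoCircle, Continuous g ∧ (∀ t, g t ∈ H) ∧
      ∀ t i, g t (X t i) = Y t i

/-- A continuous deformation of the identity in `H`: a non-constant continuous path in `H`
starting at the identity. -/
def IsIdDeformation (H : Set HomeoCircle) (f : unitInterval → HomeoCircle) : Prop :=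
  Continuous f ∧ (∀ t, f t ∈ H) ∧ f 0 = 1 ∧ ∃ t, f t ≠ 1

/-- The set `J_x`: points that can be moved by some continuous deformation of the identity
in `H` fixing `x` throughout. -/
def Jset (H : Set HomeoCircle) (x : S1) : Set S1 :=
  {y | ∃ f : unitInterval → HomeoCircle, Continuous f ∧ (∀ t, f t ∈ H) ∧ f 0 = 1 ∧
    (∀ t, f t x = x) ∧ ∃ t, f t y ≠ y}

/-- The set `J_{x₁…x_n}`: points that can be moved by some continuous deformation of the
identity in `H` fixing each `x i` throughout. -/
def JsetTuple (H : Set HomeoCircle) {n : ℕ} (x : Fin n → S1) : Set S1 :=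
  {y | ∃ f : unitInterval → HomeoCircle, Continuous f ∧ (∀ t, f t ∈ H) ∧ f 0 = 1 ∧
    (∀ t i, f t (x i) = x i) ∧ ∃ t, f t y ≠ y}

/-- The rotation group `SO(2,ℝ)`, acting on `S¹ = ℝ/ℤ` by translations. -/
def rotationSet : Set HomeoCircle :=
  {f | ∃ a : S1, ∀ x : S1, f x = a + x}

/-- `A` is conjugate to `B` inside `Homeo(S¹)`. -/
def ConjugateIn (A B : Set HomeoCircle) : Prop :=
  ∃ Φ : HomeoCircle, Φ ∈ HomeoS1 ∧ ∀ f : HomeoCircle, f ∈ A ↔ Φ⁻¹ * f * Φ ∈ B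

/-- The group `PSL(2,ℝ)` of Möbius transformations of the circle: in the coordinate
`z = e^{2πiθ}` on the unit circle, the maps `z ↦ e^{iθ}(z-a)/(1-āz)` with `|a| < 1`. -/
def mobiusSet : Set HomeoCircle :=
  {f | ∃ (a : ℂ) (θ : ℝ), ‖a‖ < 1 ∧
    ∀ x : S1, (AddCircle.toCircle (f x) : ℂ) =
      Complex.exp (θ * Complex.I) *
        (((AddCircle.toCircle x : ℂ) - a) / (1 - (starRingEnd ℂ) a * (AddCircle.toCircle x : ℂ)))}

/-- `Homeo_k(S¹)`, the `k`-fold cyclic cover of `Homeo(S¹)`: orientation-preserving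
homeomorphisms commuting with the rotation by `1/k`. -/
def homeoKSet (k : ℕ) : Set HomeoCircle :=
  {f | f ∈ HomeoS1 ∧ ∀ x : S1, f ((((k : ℝ)⁻¹ : ℝ) : S1) + x) = (((k : ℝ)⁻¹ : ℝ) : S1) + f x}

/-- `PSL_k(2,ℝ)`, the `k`-fold cyclic cover of `PSL(2,ℝ)`: elements of `Homeo_k(S¹)`
descending to a Möbius transformation under the `k`-fold covering `x ↦ k • x` of `ℝ/ℤ`. -/
def pslKSet (k : ℕ) : Set HomeoCircle :=
  {f | f ∈ homeoKSet k ∧ ∃ m ∈ mobiusSet, ∀ x : S1, k • (f x) = m (k • x)}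

/-- `Gset` is a cyclic cover of `Hset`, with deck transformation group generated by `R`,
an order-`k` homeomorphism conjugate in `Homeo(S¹)` to a rotation which commutes with every
element of `Gset`; `Hset` is the induced group on the quotient circle, realised via the
orbit projection `p`. -/
def IsCyclicCover (Gset Hset : Set HomeoCircle) (R : HomeoCircle) (k : ℕ) : Prop :=
  0 < k ∧ R ∈ HomeoS1 ∧ orderOf R = k ∧
    (∃ Φ : HomeoCircle, Φ ∈ HomeoS1 ∧ Φ⁻¹ * R * Φ ∈ rotationSet) ∧
    (∀ g ∈ Gset, ∀ x : S1, R (g x) = g (R x)) ∧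
    ∃ p : S1 → S1, Continuous p ∧ Function.Surjective p ∧
      (∀ x y : S1, p x = p y ↔ ∃ j : ℕ, (R ^ j) x = y) ∧
      (∀ h : HomeoCircle, h ∈ Hset ↔ ∃ g ∈ Gset, ∀ x : S1, p (g x) = h (p x))

/-- Condition (3): `Gset` matches every orientation-preserving homeomorphism on every
finite set of points. -/
def MatchesFinitely (Gset : Set HomeoCircle) : Prop :=
  ∀ f : HomeoCircle, f ∈ HomeoS1 → ∀ (n : ℕ) (x : Fin n → S1),
    ∃ g ∈ Gset, ∀ i, g (x i) = f (x i)

/-- `H` is a convergence group. -/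
def IsConvergenceGroup (H : Set HomeoCircle) : Prop :=
  ∀ g : ℕ → HomeoCircle, (∀ n, g n ∈ H) → Function.Injective g →
    ∃ φ : ℕ → ℕ, StrictMono φ ∧
      ((∃ h : HomeoCircle, h ∈ H ∧
          TendstoUniformly (fun k x => g (φ k) x) (⇑h) atTop ∧
          TendstoUniformly (fun k x => (g (φ k))⁻¹ x) (⇑(h⁻¹)) atTop) ∨
       (∃ x₀ y₀ : S1,
          (∀ K : Set S1, IsCompact K → K ⊆ {y₀}ᶜ →
            TendstoUniformlyOn (fun k x => g (φ k) x) (fun _ => x₀) atTop K) ∧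
          (∀ K : Set S1, IsCompact K → K ⊆ {x₀}ᶜ →
            TendstoUniformlyOn (fun k x => (g (φ k))⁻¹ x) (fun _ => y₀) atTop K)))

/-!
For `g ∈ G` we have `g J_x = J_{gx}`; each `J_x` is open, `x ∉ J_x`, and `y ∉ J_x` forces
`J_x ⊆ J_y`. By Zorn's lemma and compactness of the circle some complement `K_m = S¹ ∖ J_m` is
minimal among these sets, so `K_w = K_m` for all `w ∈ K_m`, and then transitivity of `G` makes
`K_m` a closed set on which the homeomorphisms preserving it act transitively. When some `J_x` is
nonempty, `K_m` is a proper subset of the circle, and such a homogeneous set must be finite: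
otherwise it is perfect, hence uncountable, whereas one of its points is an endpoint of a
complementary arc, hence by homogeneity all of them are, and a closed subset of the circle has only
countably many such endpoints.
-/

open Function

section Homogeneous

variable {X : Type*} [TopologicalSpace X]

def IsHomogeneousSet (M : Set X) : Prop :=
  ∀ x ∈ M, ∀ y ∈ M, ∃ g : X ≃ₜ X, g '' M = M ∧ g x = y

theorem IsHomogeneousSet.preperfect_of_infinite {M : Set X} (hM : IsHomogeneousSet M)
    (hc : IsCompact M) (hinf : M.Infinite) : Preperfect M := by
  obtain ⟨z, hzM, hz⟩ := exists_nhds_ne_inf_principal_neBot hc hinf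
  intro x hx
  obtain ⟨g, hgM, rfl⟩ := hM z hzM x hx
  have hacc : AccPt z (𝓟 M) := hz
  simpa [Filter.map_principal, hgM] using hacc.map g.continuous.continuousAt g.injective

/-- For closed `M` in the circle and `x ∈ M`: `x` is an endpoint of an arc of the complement. -/
def IsGapEndpoint (M : Set X) (x : X) : Prop :=
  ∃ I : Set X, IsOpen I ∧ IsPreconnected I ∧ Disjoint I M ∧ x ∈ closure I

theorem IsGapEndpoint.image {M : Set X} {x : X} (hx : IsGapEndpoint M x) (g : X ≃ₜ X)
    (hg : g '' M = M) : IsGapEndpoint M (g x) := by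
  obtain ⟨I, hIo, hIc, hIM, hxI⟩ := hx
  refine ⟨g '' I, g.isOpenMap I hIo, hIc.image _ g.continuous.continuousOn, ?_,
    image_closure_subset_closure_image g.continuous (mem_image_of_mem g hxI)⟩
  rw [← hg]
  exact (disjoint_image_iff g.injective).2 hIM

theorem exists_isGapEndpoint [PreconnectedSpace X] [LocallyConnectedSpace X] {M : Set X}
    (hM : IsClosed M) (hne : M.Nonempty) (hne' : M ≠ univ) : ∃ x ∈ M, IsGapEndpoint M x := by
  obtain ⟨p, hp⟩ := (ne_univ_iff_exists_notMem M).1 hne'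
  set C := connectedComponentIn Mᶜ p with hC
  have hCo : IsOpen C := hM.isOpen_compl.connectedComponentIn
  have hCM : Disjoint C M := subset_compl_iff_disjoint_right.1 (connectedComponentIn_subset _ _)
  have hC_not_closed : ¬ IsClosed C := fun h => by
    rcases isClopen_iff.1 ⟨h, hCo⟩ with h | h
    · exact h.subset (mem_connectedComponentIn hp)
    · obtain ⟨q, hq⟩ := hne
      exact hCM.notMem_of_mem_right hq (h ▸ mem_univ q)
  obtain ⟨z, hzC, hz⟩ : ∃ z ∈ closure C, z ∉ C := by
    by_contra! h
    exact hC_not_closed (closure_subset_iff_isClosed.1 h)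
  refine ⟨z, ?_, C, hCo, isPreconnected_connectedComponentIn, hCM, hzC⟩
  by_contra hzM
  -- the component of `z` in `Mᶜ` is a neighbourhood of `z`, so it meets `C`, hence equals it
  obtain ⟨q, hqz, hqC⟩ := mem_closure_iff.1 hzC _ hM.isOpen_compl.connectedComponentIn
    (mem_connectedComponentIn hzM)
  apply hz
  rw [hC, connectedComponentIn_eq hqC, ← connectedComponentIn_eq hqz]
  exact mem_connectedComponentIn hzM

end Homogeneous

section LinearOrder

variable {α : Type*} [LinearOrder α] [TopologicalSpace α] [OrderTopology α] {J W : Set α} {a : α}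

theorem IsPreconnected.nhdsWithin_inter_Iio_eq_bot (hJ : IsPreconnected J) (hJW : Disjoint J W)
    (ha : a ∈ closure (J ∩ Iio a)) : 𝓝[W ∩ Iio a] a = ⊥ := by
  obtain ⟨j, -, hjJ, hja⟩ := mem_closure_iff.1 ha univ isOpen_univ trivial
  have hIoo : Ioo j a ⊆ J := fun y hy => by
    obtain ⟨j', hyj', hj'J, -⟩ := mem_closure_iff.1 ha (Ioi y) isOpen_Ioi hy.2
    exact hJ.Icc_subset hjJ hj'J ⟨hy.1.le, hyj'.le⟩
  rw [inter_comm, nhdsWithin_inter', inf_principal_eq_bot]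
  exact mem_of_superset (Ioo_mem_nhdsLT hja) fun y hy => hJW.notMem_of_mem_left (hIoo hy)

theorem IsPreconnected.nhdsWithin_inter_Iio_or_Ioi_eq_bot (hJ : IsPreconnected J)
    (hJW : Disjoint J W) (haW : a ∈ W) (ha : a ∈ closure J) :
    𝓝[W ∩ Iio a] a = ⊥ ∨ 𝓝[W ∩ Ioi a] a = ⊥ := by
  have hJa : J ⊆ Iio a ∪ Ioi a := fun y hy =>
    lt_or_gt_of_ne (ne_of_mem_of_not_mem hy (hJW.notMem_of_mem_right haW))
  rw [← inter_eq_left.2 hJa, inter_union_distrib_left, closure_union] at ha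
  exact ha.imp (hJ.nhdsWithin_inter_Iio_eq_bot hJW)
    (IsPreconnected.nhdsWithin_inter_Iio_eq_bot (α := αᵒᵈ) hJ hJW)

end LinearOrder

theorem Perfect.not_countable {α : Type*} [MetricSpace α] [CompleteSpace α] {C : Set α}
    (hC : Perfect C) (hne : C.Nonempty) : ¬ C.Countable := by
  have hcont : Cardinal.mk (ℕ → Bool) = Cardinal.continuum := by simp
  intro hCc
  obtain ⟨f, hfC, -, hf⟩ := hC.exists_nat_bool_injection hne
  have := hCc.to_subtype
  have hcount : Countable (ℕ → Bool) :=
    Injective.countable (f := fun b => (⟨f b, hfC ⟨b, rfl⟩⟩ : C))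
      fun a b hab => hf (congrArg Subtype.val hab)
  exact (Cardinal.mk_le_aleph0_iff.2 hcount).not_gt (hcont ▸ Cardinal.aleph0_lt_continuum)

instance : LocallyConnectedSpace S1 :=
  (QuotientAddGroup.isQuotientMap_mk _).isCoinducing.locallyConnectedSpace

theorem countable_setOf_isGapEndpoint (M : Set S1) : {x ∈ M | IsGapEndpoint M x}.Countable := by
  rcases M.eq_empty_or_nonempty with rfl | ⟨p, hp⟩
  · simp
  obtain ⟨c, rfl⟩ := QuotientAddGroup.mk_surjective p
  -- the chart `Ioo c (c + 1) ≃ {↑c}ᶜ` identifies each gap with an interval of `ℝ`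
  let e := AddCircle.openPartialHomeomorphCoe (1 : ℝ) c
  let W : Set ℝ := (↑) ⁻¹' M
  refine ((((countable_setOfPred_isolated_left_within (s := W)).union
    (countable_setOfPred_isolated_right_within (s := W))).image e).insert (c : S1)).mono ?_
  rintro x ⟨hxM, I, hIo, hIc, hIM, hxI⟩
  rcases eq_or_ne x c with rfl | hxc
  · exact mem_insert _ _
  have hIt : I ⊆ e.target := fun y hy (hyc : y = _) => hIM.notMem_of_mem_right hp (hyc ▸ hy)
  have hxt : x ∈ e.target := hxc
  have hcoe : ∀ y ∈ e.target, ((e.symm y : ℝ) : S1) = y := fun y hy => e.right_inv hy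
  have hJ : IsPreconnected (e.symm '' I) := hIc.image _ (e.continuousOn_symm.mono hIt)
  have hJW : Disjoint (e.symm '' I) W := by
    refine disjoint_left.2 ?_
    rintro _ ⟨y, hy, rfl⟩ hyW
    exact hIM.notMem_of_mem_right (hcoe y (hIt hy) ▸ hyW) hy
  have hxW : e.symm x ∈ W := by
    show ((e.symm x : ℝ) : S1) ∈ M
    rwa [hcoe x hxt]
  have hxJ : e.symm x ∈ closure (e.symm '' I) :=
    (e.continuousAt_symm hxt).continuousWithinAt.mem_closure_image hxI
  refine mem_insert_of_mem _ ⟨e.symm x, ?_, e.right_inv hxt⟩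
  exact (hJ.nhdsWithin_inter_Iio_or_Ioi_eq_bot hJW hxW hxJ).imp (⟨hxW, ·⟩) (⟨hxW, ·⟩)

theorem IsHomogeneousSet.finite_of_ne_univ {M : Set S1} (hM : IsHomogeneousSet M)
    (hc : IsClosed M) (hne : M.Nonempty) (hne' : M ≠ univ) : M.Finite := by
  by_contra hinf
  have hperf : Perfect M := ⟨hc, hM.preperfect_of_infinite hc.isCompact hinf⟩
  obtain ⟨x₀, hx₀M, hx₀⟩ := exists_isGapEndpoint hc hne hne'
  refine hperf.not_countable hne ((countable_setOf_isGapEndpoint M).mono fun x hx => ?_)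
  obtain ⟨g, hg, rfl⟩ := hM x₀ hx₀M x hx
  exact ⟨hx, hx₀.image g hg⟩

theorem exists_maximal_of_isClosed_setOf_rel {X : Type*} [TopologicalSpace X] [CompactSpace X]
    [Nonempty X] {r : X → X → Prop} (hrefl : ∀ x, r x x)
    (htrans : ∀ {x y z}, r x y → r y z → r x z) (hclosed : ∀ x, IsClosed {y | r x y}) :
    ∃ m, ∀ x, r m x → r x m := by
  refine exists_maximal_of_nonempty_chains_bounded (fun c hc hne => ?_) htrans
  have := hne.to_subtype
  have hdir : Directed (· ⊇ ·) fun a : c => {y | r a y} := by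
    rintro ⟨a, ha⟩ ⟨b, hb⟩
    rcases eq_or_ne a b with rfl | hab
    · exact ⟨⟨a, ha⟩, subset_rfl, subset_rfl⟩
    rcases hc ha hb hab with h | h
    · exact ⟨⟨b, hb⟩, fun y hy => htrans h hy, subset_rfl⟩
    · exact ⟨⟨a, ha⟩, subset_rfl, fun y hy => htrans h hy⟩
  obtain ⟨u, hu⟩ := IsCompact.nonempty_iInter_of_directed_nonempty_isCompact_isClosed _ hdir
    (fun a => ⟨a, hrefl a⟩) (fun a => (hclosed a).isCompact) (fun a => hclosed a)
  exact ⟨u, fun a ha => mem_iInter.1 hu ⟨a, ha⟩⟩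

section Jset

variable {H : Set HomeoCircle} {x y : S1}

theorem isOpen_Jset (H : Set HomeoCircle) (x : S1) : IsOpen (Jset H x) := by
  refine isOpen_iff_forall_mem_open.2 fun y ⟨f, hc, hm, h0, hfix, t, hty⟩ =>
    ⟨{z | f t z ≠ z}, fun z hz => ⟨f, hc, hm, h0, hfix, t, hz⟩, ?_, hty⟩
  exact (isClosed_eq (f t).continuous continuous_id).isOpen_compl

theorem notMem_Jset_self : x ∉ Jset H x := by
  rintro ⟨_, _, _, _, hfix, t, ht⟩
  exact ht (hfix t)

theorem Jset_subset_Jset_of_notMem (hy : y ∉ Jset H x) : Jset H x ⊆ Jset H y := by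
  rintro z ⟨f, hc, hm, h0, hfix, t, ht⟩
  exact ⟨f, hc, hm, h0, fun s => by_contra fun hs => hy ⟨f, hc, hm, h0, hfix, s, hs⟩, t, ht⟩

theorem exists_Jset_eq_of_notMem (H : Set HomeoCircle) :
    ∃ m, ∀ x ∉ Jset H m, Jset H x = Jset H m := by
  obtain ⟨m, hm⟩ := exists_maximal_of_isClosed_setOf_rel (r := fun x y => y ∉ Jset H x)
    (fun _ => notMem_Jset_self) (fun hxy hyz h => hyz (Jset_subset_Jset_of_notMem hxy h))
    (fun x => (isOpen_Jset H x).isClosed_compl)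
  exact ⟨m, fun x hx => (Jset_subset_Jset_of_notMem (hm x hx)).antisymm
    (Jset_subset_Jset_of_notMem hx)⟩

theorem HomeoCircle.continuous_conj (g : HomeoCircle) :
    Continuous fun f : HomeoCircle => g * f * g⁻¹ := by
  let conj : C(S1, S1) → C(S1, S1) := fun φ => (g : C(S1, S1)).comp (φ.comp (g.symm : C(S1, S1)))
  have hconj : Continuous conj :=
    (ContinuousMap.continuous_postcomp _).comp (ContinuousMap.continuous_precomp _)
  have hpair : Continuous fun f : HomeoCircle =>
      ((⟨f, f.continuous⟩ : C(S1, S1)), (⟨f.symm, f.symm.continuous⟩ : C(S1, S1))) :=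
    continuous_induced_dom
  exact continuous_induced_rng.2 ((hconj.prodMap hconj).comp hpair)

theorem image_Jset_subset {G : Subgroup HomeoCircle} {g : HomeoCircle} (hg : g ∈ G) (x : S1) :
    g '' Jset G x ⊆ Jset G (g x) := by
  rintro _ ⟨y, ⟨f, hc, hm, h0, hfix, t, hty⟩, rfl⟩
  refine ⟨fun t => g * f t * g⁻¹, (HomeoCircle.continuous_conj g).comp hc,
    fun s => mul_mem (mul_mem hg (hm s)) (inv_mem hg), by simp [h0], fun s => ?_, t, ?_⟩
  · simp [hfix s]
  · simpa using hty

theorem image_Jset {G : Subgroup HomeoCircle} {g : HomeoCircle} (hg : g ∈ G) (x : S1) :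
    g '' Jset G x = Jset G (g x) := by
  refine (image_Jset_subset hg x).antisymm fun z hz => ⟨g⁻¹ z, ?_, by simp⟩
  simpa using image_Jset_subset (inv_mem hg) (g x) ⟨z, hz, rfl⟩

theorem isHomogeneousSet_compl_Jset {G : Subgroup HomeoCircle} (htrans : IsTransitiveGrp ↑G)
    {m : S1} (hm : ∀ x ∉ Jset G m, Jset G x = Jset G m) : IsHomogeneousSet (Jset G m)ᶜ := by
  intro x hx y hy
  obtain ⟨g, hg, rfl⟩ := htrans x y
  refine ⟨g, ?_, rfl⟩
  rw [image_compl_eq g.bijective, ← hm x hx, image_Jset hg, hm _ hy, hm x hx]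

end Jset

theorem Jset_empty_or_cofinite_general (G : Subgroup HomeoCircle)
    (htrans : IsTransitiveGrp ↑G) :
    (∀ x : S1, Jset ↑G x = ∅) ∨ (∀ x : S1, ((Jset ↑G x)ᶜ).Finite) := by
  refine or_iff_not_imp_left.2 fun hJ x => ?_
  obtain ⟨x₀, hx₀⟩ := not_forall.1 hJ
  obtain ⟨m, hm⟩ := exists_Jset_eq_of_notMem (G : Set HomeoCircle)
  have hfin : (Jset G m)ᶜ.Finite := by
    refine (isHomogeneousSet_compl_Jset htrans hm).finite_of_ne_univ
      (isOpen_Jset _ _).isClosed_compl ⟨m, notMem_Jset_self⟩ ?_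
    obtain ⟨g, hg, rfl⟩ := htrans x₀ m
    rw [Ne, compl_univ_iff, ← image_Jset hg]
    exact ((nonempty_iff_ne_empty.2 hx₀).image g).ne_empty
  obtain ⟨g, hg, rfl⟩ := htrans m x
  rw [← image_Jset hg, ← image_compl_eq g.bijective]
  exact hfin.image g

/-- Either `J_x = ∅` for every `x ∈ S¹`, or `J_x` has finite complement for every
`x ∈ S¹`. -/
theorem Jset_empty_or_cofinite (G : Subgroup HomeoCircle) (hsub : G ≤ HomeoS1)
    (htrans : IsTransitiveGrp ↑G)
    (hdef : ∃ f : unitInterval → HomeoCircle, IsIdDeformation ↑G f) :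
    (∀ x : S1, Jset ↑G x = ∅) ∨ (∀ x : S1, ((Jset ↑G x)ᶜ).Finite) :=
  Jset_empty_or_cofinite_general G htrans
end
end

section
/- If f : ℝ → ℝ is a homeomorphism such that f ∘ T_a ∘ f⁻¹ is a translation for every translation T_a, then f is an affine map, i.e. there exist α ≠ 0 and β ∈ ℝ with f(x) = αx + β for all x. -/
noncomputable section

open Filter Topology Set

/-- A homeomorphism of `ℝ` which conjugates translations to translations is affine. -/
theorem affine_of_conjugates_translations (f : ℝ ≃ₜ ℝ)
    (h : ∀ a : ℝ, ∃ b : ℝ, ∀ x : ℝ, f (x + a) = f x + b) :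
    ∃ α β : ℝ, α ≠ 0 ∧ ∀ x : ℝ, f x = α * x + β := by
  have key : ∀ x a : ℝ, f (x + a) = f x + (f a - f 0) := by
    intro x a
    obtain ⟨b, hb⟩ := h a
    have h0 := hb 0
    rw [zero_add] at h0
    rw [hb x, h0]; ring
  set g : ℝ →+ ℝ := {
    toFun := fun x => f x - f 0
    map_zero' := by simp
    map_add' := fun x y => by show f (x + y) - f 0 = (f x - f 0) + (f y - f 0); rw [key x y]; ring }
  have hg : Continuous g := by continuity
  have hlin := g.coe_toRealLinearMap hg
  have hmul : ∀ x : ℝ, g x = g 1 * x := fun x => by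
    have := (g.toRealLinearMap hg).map_smul x 1
    simp only [hlin, smul_eq_mul, mul_one] at this
    rw [this, mul_comm]
  refine ⟨f 1 - f 0, f 0, ?_, fun x => ?_⟩
  · intro hα
    have : f 1 = f 0 := by linarith
    exact one_ne_zero (f.injective this)
  · have := hmul x
    simp only [g, AddMonoidHom.coe_mk, ZeroHom.coe_mk] at this
    linarith
end
end
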